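/- Let n ≥ 1 and let c_1, …, c_{2n} ∈ ℂ^{2^n × 2^n} be Majorana operators. Let H = Σ_{(j,k)∈E} (w_{jk}/4)·(1 + i c_{2j−1}c_{2k} − i c_{2j}c_{2k−1} + c_{2j−1}c_{2j}c_{2k−1}c_{2k}) with w_{jk} ≥ 0 (the Fermionic Max Cut Hamiltonian, which is positive semi-definite). Then there exists a pure fermionic Gaussian state ρ such that tr(ρ H) ≥ (1/2)·λ_max(H). -/
import Mathlib


open Matrix
open scoped ComplexOrder

noncomputable section

/-- A family of `2n` Majorana operators on `ℂ^(2^n)`. -/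
def IsMajorana (n : ℕ) (c : Fin (2*n) → Matrix (Fin (2^n)) (Fin (2^n)) ℂ) : Prop :=
  (∀ j, (c j).IsHermitian) ∧
  ∀ j k, c j * c k + c k * c j =
    if j = k then (2 : ℂ) • (1 : Matrix (Fin (2^n)) (Fin (2^n)) ℂ) else 0

/-- The first Majorana operator of mode `j` (i.e. `c_{2j-1}` in 1-based indexing). -/
def majA (n : ℕ) (c : Fin (2*n) → Matrix (Fin (2^n)) (Fin (2^n)) ℂ) (j : Fin n) :
    Matrix (Fin (2^n)) (Fin (2^n)) ℂ :=
  c ⟨2*j, by have := j.isLt; omega⟩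

/-- The second Majorana operator of mode `j` (i.e. `c_{2j}` in 1-based indexing). -/
def majB (n : ℕ) (c : Fin (2*n) → Matrix (Fin (2^n)) (Fin (2^n)) ℂ) (j : Fin n) :
    Matrix (Fin (2^n)) (Fin (2^n)) ℂ :=
  c ⟨2*j+1, by have := j.isLt; omega⟩

/-- Annihilation operator `a_j = (c_{2j-1} + i c_{2j})/2`. -/
def ann (n : ℕ) (c : Fin (2*n) → Matrix (Fin (2^n)) (Fin (2^n)) ℂ) (j : Fin n) :
    Matrix (Fin (2^n)) (Fin (2^n)) ℂ :=
  ((1:ℂ)/2) • (majA n c j + Complex.I • majB n c j)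

/-- Number operator `n_j = a_j† a_j`. -/
def num (n : ℕ) (c : Fin (2*n) → Matrix (Fin (2^n)) (Fin (2^n)) ℂ) (j : Fin n) :
    Matrix (Fin (2^n)) (Fin (2^n)) ℂ :=
  (ann n c j)ᴴ * ann n c j

/-- The fermionic Gaussian state `2^{-n} ∏_j (1 + i λ_j c̃_{2j-1} c̃_{2j})`,
where `c̃_i = Σ_k R_{ik} c_k`. -/
def gaussOf (n : ℕ) (c : Fin (2*n) → Matrix (Fin (2^n)) (Fin (2^n)) ℂ)
    (lam : Fin n → ℝ) (R : Matrix (Fin (2*n)) (Fin (2*n)) ℝ) :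
    Matrix (Fin (2^n)) (Fin (2^n)) ℂ :=
  ((2:ℂ)^n)⁻¹ •
    ((List.finRange n).map (fun j =>
      (1 : Matrix (Fin (2^n)) (Fin (2^n)) ℂ) +
        (Complex.I * (lam j : ℂ)) •
          ((∑ k, ((R ⟨2*j, by have := j.isLt; omega⟩ k : ℝ) : ℂ) • c k) *
           (∑ k, ((R ⟨2*j+1, by have := j.isLt; omega⟩ k : ℝ) : ℂ) • c k)))).prod

/-- A (generally mixed) fermionic Gaussian state. -/
def IsGaussianState (n : ℕ) (c : Fin (2*n) → Matrix (Fin (2^n)) (Fin (2^n)) ℂ)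
    (ρ : Matrix (Fin (2^n)) (Fin (2^n)) ℂ) : Prop :=
  ∃ (lam : Fin n → ℝ) (R : Matrix (Fin (2*n)) (Fin (2*n)) ℝ),
    (∀ j, lam j ∈ Set.Icc (-1:ℝ) 1) ∧ R * Rᵀ = 1 ∧ R.det = 1 ∧ ρ = gaussOf n c lam R

/-- A pure fermionic Gaussian state: all `λ_j = ±1`. -/
def IsPureGaussianState (n : ℕ) (c : Fin (2*n) → Matrix (Fin (2^n)) (Fin (2^n)) ℂ)
    (ρ : Matrix (Fin (2^n)) (Fin (2^n)) ℂ) : Prop :=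
  ∃ (lam : Fin n → ℝ) (R : Matrix (Fin (2*n)) (Fin (2*n)) ℝ),
    (∀ j, lam j = 1 ∨ lam j = -1) ∧ R * Rᵀ = 1 ∧ R.det = 1 ∧ ρ = gaussOf n c lam R

/-- The largest (real) eigenvalue of a Hermitian matrix. -/
def lamMax {m : Type} [Fintype m] [DecidableEq m] (M : Matrix m m ℂ) : ℝ :=
  sSup {x : ℝ | (x : ℂ) ∈ spectrum ℂ M}

namespace FMC
variable {n : ℕ} {c : Fin (2*n) → Matrix (Fin (2^n)) (Fin (2^n)) ℂ}

abbrev Mat (n : ℕ) := Matrix (Fin (2^n)) (Fin (2^n)) ℂ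

def iA (l : Fin n) : Fin (2*n) := ⟨2*l, by have := l.isLt; omega⟩
def iB (l : Fin n) : Fin (2*n) := ⟨2*l+1, by have := l.isLt; omega⟩

theorem hsq (hc : IsMajorana n c) (j : Fin (2*n)) : c j * c j = 1 := by
  have h := hc.2 j j
  rw [if_pos rfl] at h
  have h2 : (2:ℂ) • (c j * c j) = (2:ℂ) • (1 : Mat n) := by
    rw [two_smul]; exact h
  exact smul_right_injective _ (by norm_num) h2

theorem hswap (hc : IsMajorana n c) {j k : Fin (2*n)} (h : j ≠ k) :
    c j * c k = -(c k * c j) := by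
  have h2 := hc.2 j k
  rw [if_neg h] at h2
  linear_combination (norm := abel) h2

theorem hherm (hc : IsMajorana n c) (j : Fin (2*n)) : (c j)ᴴ = c j := hc.1 j

/-- right-assoc swap -/
theorem lswap (hc : IsMajorana n c) {x y : Fin (2*n)} (h : x ≠ y) (M : Mat n) :
    c x * (c y * M) = -(c y * (c x * M)) := by
  rw [← mul_assoc, hswap hc h, neg_mul, mul_assoc]

theorem lcancel (hc : IsMajorana n c) (x : Fin (2*n)) (M : Mat n) :
    c x * (c x * M) = M := by
  rw [← mul_assoc, hsq hc, one_mul]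

end FMC

namespace FMC
variable {n : ℕ} {c : Fin (2*n) → Matrix (Fin (2^n)) (Fin (2^n)) ℂ}
variable (c) in
/-- the "Pauli Z" of mode l -/
def z (l : Fin n) : Mat n := Complex.I • (c (iA l) * c (iB l))

def sgn (b : Bool) : ℝ := if b then 1 else -1

theorem sgn_mul_self (b : Bool) : sgn b * sgn b = 1 := by cases b <;> simp [sgn]

theorem sgn_add_neg (b : Bool) : sgn b + sgn (!b) = 0 := by cases b <;> simp [sgn]

theorem sgn_cases (b : Bool) : sgn b = 1 ∨ sgn b = -1 := by cases b <;> simp [sgn]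

variable (c) in
def fac (σ : Fin n → Bool) (l : Fin n) : Mat n := 1 + ((sgn (σ l) : ℝ) : ℂ) • z c l

variable (c) in
def Q (σ : Fin n → Bool) (L : List (Fin n)) : Mat n := (L.map (fac c σ)).prod

theorem Q_nil (σ : Fin n → Bool) : Q c σ [] = 1 := rfl

theorem Q_cons (σ : Fin n → Bool) (a : Fin n) (L : List (Fin n)) :
    Q c σ (a :: L) = fac c σ a * Q c σ L := by
  simp [Q]

-- index distinctness
theorem iA_ne_iB (l m : Fin n) : iA l ≠ iB m := by
  simp only [iA, iB, ne_eq, Fin.mk.injEq]; omega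

theorem iB_ne_iA (l m : Fin n) : iB l ≠ iA m := (iA_ne_iB m l).symm

theorem iA_ne_iA {l m : Fin n} (h : l ≠ m) : iA l ≠ iA m := by
  simp only [iA, ne_eq, Fin.mk.injEq]
  have : (l:ℕ) ≠ m := fun hh => h (Fin.ext hh)
  omega

theorem iB_ne_iB {l m : Fin n} (h : l ≠ m) : iB l ≠ iB m := by
  simp only [iB, ne_eq, Fin.mk.injEq]
  have : (l:ℕ) ≠ m := fun hh => h (Fin.ext hh)
  omega

-- commutation of a single c with z m
theorem c_comm_z (hc : IsMajorana n c) {x : Fin (2*n)} {m : Fin n}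
    (h1 : x ≠ iA m) (h2 : x ≠ iB m) : c x * z c m = z c m * c x := by
  unfold z
  rw [mul_smul_comm, smul_mul_assoc]
  congr 1
  rw [lswap hc h1, hswap hc h2, mul_neg, neg_neg, ← mul_assoc]

theorem z_comm (hc : IsMajorana n c) (l m : Fin n) :
    z c l * z c m = z c m * z c l := by
  rcases eq_or_ne l m with rfl | h
  · rfl
  · show (Complex.I • (c (iA l) * c (iB l))) * z c m = _
    rw [smul_mul_assoc, mul_assoc,
      c_comm_z hc (iB_ne_iA l m) (iB_ne_iB h), ← mul_assoc,
      c_comm_z hc (iA_ne_iA h) (iA_ne_iB l m), mul_assoc, ← mul_smul_comm]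
    rfl

theorem z_sq (hc : IsMajorana n c) (l : Fin n) : z c l * z c l = 1 := by
  unfold z
  rw [smul_mul_smul_comm, Complex.I_mul_I, mul_assoc, lswap hc (iB_ne_iA l l),
    mul_neg, lcancel hc, hsq hc]
  simp

theorem z_herm (hc : IsMajorana n c) (l : Fin n) : (z c l)ᴴ = z c l := by
  unfold z
  rw [conjTranspose_smul, conjTranspose_mul, hherm hc, hherm hc,
    hswap hc (iB_ne_iA l l)]
  simp

end FMC

namespace FMC
variable {n : ℕ} {c : Fin (2*n) → Matrix (Fin (2^n)) (Fin (2^n)) ℂ}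

theorem z_comm_fac (hc : IsMajorana n c) (σ : Fin n → Bool) (l m : Fin n) :
    z c l * fac c σ m = fac c σ m * z c l := by
  unfold fac
  rw [mul_add, add_mul, mul_one, one_mul, mul_smul_comm, smul_mul_assoc, z_comm hc]

theorem z_comm_Q (hc : IsMajorana n c) (σ : Fin n → Bool) (l : Fin n) (L : List (Fin n)) :
    z c l * Q c σ L = Q c σ L * z c l := by
  induction L with
  | nil => simp [Q_nil]
  | cons a L ih =>
      rw [Q_cons, ← mul_assoc, z_comm_fac hc, mul_assoc, ih, mul_assoc]

theorem fac_sq (hc : IsMajorana n c) (σ : Fin n → Bool) (l : Fin n) :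
    fac c σ l * fac c σ l = (2:ℂ) • fac c σ l := by
  unfold fac
  have ha : (((sgn (σ l) : ℝ):ℂ) • z c l) * (((sgn (σ l) : ℝ):ℂ) • z c l) = 1 := by
    rw [smul_mul_smul_comm, z_sq hc, ← Complex.ofReal_mul, sgn_mul_self,
      Complex.ofReal_one, one_smul]
  rw [mul_add, add_mul, add_mul, one_mul, mul_one, ha, two_smul]
  simp only [one_mul]
  abel

theorem fac_mul_z (hc : IsMajorana n c) (σ : Fin n → Bool) (l : Fin n) :
    fac c σ l * z c l = ((sgn (σ l) : ℝ) : ℂ) • fac c σ l := by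
  unfold fac
  rw [add_mul, one_mul, smul_mul_assoc, z_sq hc, smul_add, smul_smul,
    ← Complex.ofReal_mul, sgn_mul_self, Complex.ofReal_one, one_smul]
  abel

theorem Q_mul_z (hc : IsMajorana n c) (σ : Fin n → Bool) {l : Fin n} {L : List (Fin n)}
    (hl : l ∈ L) : Q c σ L * z c l = ((sgn (σ l) : ℝ) : ℂ) • Q c σ L := by
  induction L with
  | nil => simp at hl
  | cons a L ih =>
      rw [Q_cons, mul_assoc]
      rcases List.mem_cons.1 hl with rfl | hl'
      · rw [← z_comm_Q hc, ← mul_assoc, fac_mul_z hc, smul_mul_assoc]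
      · rw [ih hl', mul_smul_comm]

theorem Q_mul_zz (hc : IsMajorana n c) (σ : Fin n → Bool) {l m : Fin n} {L : List (Fin n)}
    (hl : l ∈ L) (hm : m ∈ L) :
    Q c σ L * (z c l * z c m) = (((sgn (σ l) * sgn (σ m) : ℝ)) : ℂ) • Q c σ L := by
  rw [← mul_assoc, Q_mul_z hc σ hl, smul_mul_assoc, Q_mul_z hc σ hm, smul_smul]
  push_cast
  ring_nf

theorem Q_herm (hc : IsMajorana n c) (σ : Fin n → Bool) (L : List (Fin n)) :
    (Q c σ L)ᴴ = Q c σ L := by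
  induction L with
  | nil => simp [Q_nil]
  | cons a L ih =>
      have hfac : (fac c σ a)ᴴ = fac c σ a := by
        unfold fac
        rw [conjTranspose_add, conjTranspose_smul, z_herm hc, conjTranspose_one]
        congr 1
        simp
      have hcomm : fac c σ a * Q c σ L = Q c σ L * fac c σ a := by
        unfold fac
        rw [add_mul, mul_add, one_mul, mul_one, smul_mul_assoc, mul_smul_comm,
          z_comm_Q hc]
      rw [Q_cons, conjTranspose_mul, ih, hfac, hcomm]

theorem Q_mul_Q (hc : IsMajorana n c) (σ : Fin n → Bool) (L : List (Fin n)) :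
    Q c σ L * Q c σ L = ((2:ℂ)^L.length) • Q c σ L := by
  induction L with
  | nil => simp [Q_nil]
  | cons a L ih =>
      have hcomm : fac c σ a * Q c σ L = Q c σ L * fac c σ a := by
        unfold fac
        rw [add_mul, mul_add, one_mul, mul_one, smul_mul_assoc, mul_smul_comm,
          z_comm_Q hc]
      rw [Q_cons, mul_assoc, ← mul_assoc (Q c σ L), ← hcomm, mul_assoc,
        ← mul_assoc, fac_sq hc, ih, smul_mul_assoc, mul_smul_comm, smul_smul]
      rw [List.length_cons, pow_succ]
      ring_nf

end FMC

namespace FMC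
variable {n : ℕ} {c : Fin (2*n) → Matrix (Fin (2^n)) (Fin (2^n)) ℂ}

theorem c_comm_fac (hc : IsMajorana n c) (σ : Fin n → Bool) {x : Fin (2*n)} {m : Fin n}
    (h1 : x ≠ iA m) (h2 : x ≠ iB m) : c x * fac c σ m = fac c σ m * c x := by
  unfold fac
  rw [mul_add, add_mul, mul_one, one_mul, mul_smul_comm, smul_mul_assoc,
    c_comm_z hc h1 h2]

theorem c_comm_Q (hc : IsMajorana n c) (σ : Fin n → Bool) {x : Fin (2*n)} {L : List (Fin n)}
    (h : ∀ m ∈ L, x ≠ iA m ∧ x ≠ iB m) : c x * Q c σ L = Q c σ L * c x := by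
  induction L with
  | nil => simp [Q_nil]
  | cons a L ih =>
      rw [Q_cons, ← mul_assoc, c_comm_fac hc σ (h a (by simp)).1 (h a (by simp)).2,
        mul_assoc, ih (fun m hm => h m (by simp [hm])), mul_assoc]

theorem trace_Q_mul_z (hc : IsMajorana n c) (σ : Fin n → Bool) {a : Fin n} {L : List (Fin n)}
    (h : ∀ m ∈ L, a ≠ m) : (Q c σ L * z c a).trace = 0 := by
  have hmem : ∀ x : Fin (2*n), (∀ m ∈ L, x ≠ iA m ∧ x ≠ iB m) →
      c x * Q c σ L = Q c σ L * c x := fun x hx => c_comm_Q hc σ hx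
  have hA : c (iA a) * Q c σ L = Q c σ L * c (iA a) :=
    hmem _ (fun m hm => ⟨iA_ne_iA (h m hm), iA_ne_iB a m⟩)
  have hB : c (iB a) * Q c σ L = Q c σ L * c (iB a) :=
    hmem _ (fun m hm => ⟨iB_ne_iA a m, iB_ne_iB (h m hm)⟩)
  have key : (Q c σ L * (c (iA a) * c (iB a))).trace = 0 := by
    have h1 : (Q c σ L * (c (iA a) * c (iB a))).trace
        = (Q c σ L * (c (iB a) * c (iA a))).trace := by
      calc (Q c σ L * (c (iA a) * c (iB a))).trace
          = ((Q c σ L * c (iA a)) * c (iB a)).trace := by rw [mul_assoc]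
        _ = (c (iB a) * (Q c σ L * c (iA a))).trace := trace_mul_comm _ _
        _ = ((c (iB a) * Q c σ L) * c (iA a)).trace := by rw [mul_assoc]
        _ = ((Q c σ L * c (iB a)) * c (iA a)).trace := by rw [hB]
        _ = (Q c σ L * (c (iB a) * c (iA a))).trace := by rw [mul_assoc]
    rw [hswap hc (iB_ne_iA a a), mul_neg, trace_neg] at h1
    linear_combination h1 / 2
  unfold z
  rw [mul_smul_comm, trace_smul, key, smul_zero]

theorem trace_Q (hc : IsMajorana n c) (σ : Fin n → Bool) {L : List (Fin n)}
    (hL : L.Nodup) : (Q c σ L).trace = (2:ℂ)^n := by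
  induction L with
  | nil =>
      simp only [Q_nil, trace_one]
      push_cast
      simp
  | cons a L ih =>
      have ha : a ∉ L := (List.nodup_cons.mp hL).1
      have hL' := (List.nodup_cons.mp hL).2
      have hz : (Q c σ L * z c a).trace = 0 :=
        trace_Q_mul_z hc σ (fun m hm => fun he => ha (he ▸ hm))
      rw [Q_cons]
      unfold fac
      rw [add_mul, one_mul, smul_mul_assoc, trace_add, trace_smul,
        trace_mul_comm, hz, smul_zero, add_zero, ih hL']

theorem Q_congr {σ σ' : Fin n → Bool} {L : List (Fin n)}
    (h : ∀ m ∈ L, σ m = σ' m) : Q c σ L = Q c σ' L := by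
  induction L with
  | nil => rfl
  | cons a L ih =>
      rw [Q_cons, Q_cons, ih (fun m hm => h m (by simp [hm]))]
      unfold fac
      rw [h a (by simp)]

theorem sum_Q (hc : IsMajorana n c) {L : List (Fin n)} (hL : L.Nodup) :
    ∑ σ : Fin n → Bool, Q c σ L = ((2:ℂ)^n) • 1 := by
  induction L with
  | nil =>
      simp only [Q_nil, Finset.sum_const, Finset.card_univ]
      rw [← Nat.cast_smul_eq_nsmul ℂ]
      congr 1
      push_cast
      simp [Fintype.card_fun]
  | cons a L ih =>
      have ha : a ∉ L := (List.nodup_cons.mp hL).1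
      have hL' := (List.nodup_cons.mp hL).2
      set ι : (Fin n → Bool) → (Fin n → Bool) := fun σ => Function.update σ a (!σ a) with hι
      have hinv : Function.Involutive ι := by
        intro σ; funext x
        rcases eq_or_ne x a with rfl | hx
        · simp [ι]
        · simp [ι, Function.update_of_ne hx]
      have hsum : ∑ σ, Q c (ι σ) (a::L) = ∑ σ, Q c σ (a::L) :=
        Equiv.sum_comp hinv.toPerm (fun σ => Q c σ (a::L))
      have key : (2:ℂ) • ∑ σ : Fin n → Bool, Q c σ (a::L)
          = (2:ℂ) • (((2:ℂ)^n) • (1 : Mat n)) := by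
        calc (2:ℂ) • ∑ σ : Fin n → Bool, Q c σ (a::L)
            = ∑ σ : Fin n → Bool, (Q c σ (a::L) + Q c (ι σ) (a::L)) := by
              rw [Finset.sum_add_distrib, hsum, two_smul]
          _ = ∑ σ : Fin n → Bool, (2:ℂ) • Q c σ L := by
              refine Finset.sum_congr rfl fun σ _ => ?_
              have h1 : Q c (ι σ) L = Q c σ L :=
                Q_congr (fun m hm => by
                  have : m ≠ a := fun he => ha (he ▸ hm)
                  simp [ι, Function.update_of_ne this])
              have hia : (ι σ) a = !σ a := by simp [ι]
              rw [Q_cons, Q_cons, h1, ← add_mul]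
              have h2 : fac c σ a + fac c (ι σ) a = (2:ℂ) • 1 := by
                unfold fac
                rw [hia, add_add_add_comm, ← add_smul, ← Complex.ofReal_add,
                  sgn_add_neg, Complex.ofReal_zero, zero_smul, add_zero, two_smul]
              rw [h2, smul_mul_assoc, one_mul]
          _ = (2:ℂ) • (((2:ℂ)^n) • (1 : Mat n)) := by rw [← Finset.smul_sum, ih hL']
      exact smul_right_injective _ two_ne_zero key

end FMC

namespace FMC
variable {n : ℕ} {c : Fin (2*n) → Matrix (Fin (2^n)) (Fin (2^n)) ℂ}

theorem W1 (hc : IsMajorana n c) {p q : Fin (2*n)} (r : Fin (2*n)) (hqp : q ≠ p) :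
    (c p * c q) * (c p * c r) = -(c q * c r) := by
  rw [mul_assoc, lswap hc hqp, mul_neg, lcancel hc]

theorem anti_u (hc : IsMajorana n c) {j k : Fin n} (hjk : j ≠ k) :
    (Complex.I • (c (iA j) * c (iB k))) * z c j
      = -(z c j * (Complex.I • (c (iA j) * c (iB k)))) := by
  unfold z
  rw [smul_mul_smul_comm, smul_mul_smul_comm, Complex.I_mul_I,
    W1 hc (iB j) (iB_ne_iA k j), W1 hc (iB k) (iB_ne_iA j j),
    hswap hc (iB_ne_iB (Ne.symm hjk))]
  module

theorem anti_v (hc : IsMajorana n c) {j k : Fin n} (hjk : j ≠ k) :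
    (Complex.I • (c (iB j) * c (iA k))) * z c j
      = -(z c j * (Complex.I • (c (iB j) * c (iA k)))) := by
  unfold z
  rw [smul_mul_smul_comm, smul_mul_smul_comm, Complex.I_mul_I]
  have h1 : (c (iB j) * c (iA k)) * (c (iA j) * c (iB j))
      = c (iA k) * c (iA j) := by
    rw [hswap hc (iA_ne_iB j j), mul_neg, W1 hc (iA j) (iA_ne_iB k j), neg_neg]
  have h2 : (c (iA j) * c (iB j)) * (c (iB j) * c (iA k))
      = -(c (iA k) * c (iA j)) := by
    rw [mul_assoc, lcancel hc]
    exact hswap hc (iA_ne_iA hjk)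
  rw [h1, h2]
  module

theorem u_sq (hc : IsMajorana n c) {x y : Fin (2*n)} (hxy : y ≠ x) :
    (Complex.I • (c x * c y)) * (Complex.I • (c x * c y)) = 1 := by
  rw [smul_mul_smul_comm, Complex.I_mul_I, W1 hc y hxy, hsq hc]
  module

theorem u_herm (hc : IsMajorana n c) {x y : Fin (2*n)} (hxy : x ≠ y) :
    (Complex.I • (c x * c y))ᴴ = Complex.I • (c x * c y) := by
  rw [conjTranspose_smul, conjTranspose_mul, hherm hc, hherm hc,
    hswap hc (Ne.symm hxy)]
  simp

theorem trace_anti (hc : IsMajorana n c) (σ : Fin n → Bool) {l : Fin n} {L : List (Fin n)}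
    (hl : l ∈ L) {u : Mat n} (hu : u * z c l = -(z c l * u)) :
    (Q c σ L * u).trace = 0 := by
  have hu' : z c l * u = -(u * z c l) := by rw [hu, neg_neg]
  have h1 : Q c σ L * u
      = -(((sgn (σ l) : ℝ) : ℂ) • ((Q c σ L * u) * z c l)) := by
    have huz : u = z c l * (z c l * u) := by rw [← mul_assoc, z_sq hc, one_mul]
    calc Q c σ L * u = Q c σ L * (z c l * (z c l * u)) := by rw [← huz]
      _ = (Q c σ L * z c l) * (z c l * u) := by rw [mul_assoc]
      _ = (((sgn (σ l) : ℝ) : ℂ) • Q c σ L) * (z c l * u) := by rw [Q_mul_z hc σ hl]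
      _ = ((sgn (σ l) : ℝ) : ℂ) • (Q c σ L * (z c l * u)) := by rw [smul_mul_assoc]
      _ = ((sgn (σ l) : ℝ) : ℂ) • (Q c σ L * (-(u * z c l))) := by rw [hu']
      _ = -(((sgn (σ l) : ℝ) : ℂ) • ((Q c σ L * u) * z c l)) := by
            rw [mul_neg, smul_neg, mul_assoc]
  have h2 := congrArg trace h1
  rw [trace_neg, trace_smul, trace_mul_comm (Q c σ L * u) (z c l), ← mul_assoc,
    z_comm_Q hc, Q_mul_z hc σ hl, smul_mul_assoc, trace_smul] at h2
  have hss : ((sgn (σ l) : ℝ) : ℂ) * ((sgn (σ l) : ℝ) : ℂ) = 1 := by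
    rw [← Complex.ofReal_mul, sgn_mul_self, Complex.ofReal_one]
  set t := (Q c σ L * u).trace with ht
  have : t = -(((sgn (σ l) : ℝ) : ℂ) * (((sgn (σ l) : ℝ) : ℂ) * t)) := by
    simpa [smul_eq_mul] using h2
  linear_combination this / 2 - (t / 2) * hss

end FMC

namespace FMC
variable {n : ℕ} {c : Fin (2*n) → Matrix (Fin (2^n)) (Fin (2^n)) ℂ}

theorem two_pow_ne : ((2:ℂ)^n) ≠ 0 := pow_ne_zero n two_ne_zero

variable (c) in
def rho (σ : Fin n → Bool) : Mat n := ((2:ℂ)^n)⁻¹ • Q c σ (List.finRange n)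

theorem rho_herm (hc : IsMajorana n c) (σ : Fin n → Bool) : (rho c σ)ᴴ = rho c σ := by
  unfold rho
  rw [conjTranspose_smul, Q_herm hc]
  congr 1
  simp

theorem rho_sq (hc : IsMajorana n c) (σ : Fin n → Bool) :
    rho c σ * rho c σ = rho c σ := by
  unfold rho
  rw [smul_mul_smul_comm, Q_mul_Q hc, List.length_finRange, smul_smul]
  congr 1
  field_simp

theorem rho_eq_conj (hc : IsMajorana n c) (σ : Fin n → Bool) :
    rho c σ = (rho c σ)ᴴ * rho c σ := by
  rw [rho_herm hc, rho_sq hc]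

theorem sum_rho (hc : IsMajorana n c) : ∑ σ : Fin n → Bool, rho c σ = 1 := by
  unfold rho
  rw [← Finset.smul_sum, sum_Q hc (List.nodup_finRange n), smul_smul,
    inv_mul_cancel₀ two_pow_ne, one_smul]

theorem rho_mul_zz (hc : IsMajorana n c) (σ : Fin n → Bool) (j k : Fin n) :
    rho c σ * (z c j * z c k)
      = ((sgn (σ j) * sgn (σ k) : ℝ) : ℂ) • rho c σ := by
  unfold rho
  rw [smul_mul_assoc, Q_mul_zz hc σ (List.mem_finRange j) (List.mem_finRange k),
    smul_comm]

theorem q_eq (j k : Fin n) :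
    c (iA j) * c (iB j) * c (iA k) * c (iB k) = -(z c j * z c k) := by
  unfold z
  rw [smul_mul_smul_comm, Complex.I_mul_I,
    mul_assoc (c (iA j) * c (iB j)) (c (iA k)) (c (iB k))]
  module

theorem word_uv (hc : IsMajorana n c) {j k : Fin n} (hjk : j ≠ k) :
    (c (iA j) * c (iB k)) * (c (iB j) * c (iA k))
      = c (iA j) * (c (iB j) * (c (iA k) * c (iB k))) := by
  rw [mul_assoc, lswap hc (iB_ne_iB (Ne.symm hjk)), hswap hc (iB_ne_iA k k)]
  simp only [mul_neg, neg_neg]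

theorem word_vu (hc : IsMajorana n c) {j k : Fin n} (hjk : j ≠ k) :
    (c (iB j) * c (iA k)) * (c (iA j) * c (iB k))
      = c (iA j) * (c (iB j) * (c (iA k) * c (iB k))) := by
  rw [mul_assoc, lswap hc (iA_ne_iA (Ne.symm hjk)), mul_neg,
    lswap hc (iB_ne_iA j j)]
  simp only [mul_neg, neg_neg]

end FMC

namespace FMC
variable {n : ℕ} {c : Fin (2*n) → Matrix (Fin (2^n)) (Fin (2^n)) ℂ}

variable (c) in
def uE (j k : Fin n) : Mat n := Complex.I • (c (iA j) * c (iB k))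
variable (c) in
def vE (j k : Fin n) : Mat n := Complex.I • (c (iB j) * c (iA k))
variable (c) in
def XE (j k : Fin n) : Mat n :=
  1 + uE c j k - vE c j k + c (iA j) * c (iB j) * c (iA k) * c (iB k)
variable (c) in
def GE (j k : Fin n) : Mat n := (1 - uE c j k) * (1 + vE c j k)

theorem uE_mul_vE (hc : IsMajorana n c) {j k : Fin n} (hjk : j ≠ k) :
    uE c j k * vE c j k = -(c (iA j) * c (iB j) * c (iA k) * c (iB k)) := by
  unfold uE vE
  rw [smul_mul_smul_comm, Complex.I_mul_I, word_uv hc hjk, mul_assoc, mul_assoc]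
  module

theorem vE_mul_uE (hc : IsMajorana n c) {j k : Fin n} (hjk : j ≠ k) :
    vE c j k * uE c j k = -(c (iA j) * c (iB j) * c (iA k) * c (iB k)) := by
  unfold uE vE
  rw [smul_mul_smul_comm, Complex.I_mul_I, word_vu hc hjk, mul_assoc, mul_assoc]
  module

theorem uE_sq (hc : IsMajorana n c) (j k : Fin n) : uE c j k * uE c j k = 1 :=
  u_sq hc (iB_ne_iA k j)

theorem vE_sq (hc : IsMajorana n c) (j k : Fin n) : vE c j k * vE c j k = 1 :=
  u_sq hc (iA_ne_iB k j)

theorem uE_herm (hc : IsMajorana n c) (j k : Fin n) : (uE c j k)ᴴ = uE c j k :=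
  u_herm hc (iA_ne_iB j k)

theorem vE_herm (hc : IsMajorana n c) (j k : Fin n) : (vE c j k)ᴴ = vE c j k :=
  u_herm hc (iB_ne_iA j k)

theorem GE_add_XE (hc : IsMajorana n c) {j k : Fin n} (hjk : j ≠ k) :
    GE c j k + XE c j k = (2:ℂ) • (1 - z c j * z c k) := by
  have h1 : GE c j k = 1 + vE c j k - uE c j k - uE c j k * vE c j k := by
    unfold GE; noncomm_ring
  rw [h1, uE_mul_vE hc hjk]
  unfold XE
  rw [q_eq]
  module

theorem GE_conj (hc : IsMajorana n c) {j k : Fin n} (hjk : j ≠ k) :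
    GE c j k = (((1:ℂ)/2) • GE c j k)ᴴ * (((1:ℂ)/2) • GE c j k) := by
  set u := uE c j k
  set v := vE c j k
  have hMM : (1 - u) * (1 - u) = (2:ℂ) • (1 - u) := by
    have e : (1 - u) * (1 - u) = 1 - u - u + u * u := by noncomm_ring
    rw [e, uE_sq hc]; module
  have hNN : (1 + v) * (1 + v) = (2:ℂ) • (1 + v) := by
    have e : (1 + v) * (1 + v) = 1 + v + v + v * v := by noncomm_ring
    rw [e, vE_sq hc]; module
  have hcomm : (1 - u) * (1 + v) = (1 + v) * (1 - u) := by
    have e1 : (1 - u) * (1 + v) = 1 + v - u - u * v := by noncomm_ring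
    have e2 : (1 + v) * (1 - u) = 1 - u + v - v * u := by noncomm_ring
    rw [e1, e2, uE_mul_vE hc hjk, vE_mul_uE hc hjk]; abel
  have hermeq : (GE c j k)ᴴ = (1 + v) * (1 - u) := by
    unfold GE
    rw [conjTranspose_mul, conjTranspose_sub, conjTranspose_add,
      conjTranspose_one, uE_herm hc, vE_herm hc]
  have h4 : (GE c j k)ᴴ * GE c j k = (4:ℂ) • GE c j k := by
    rw [hermeq]
    show (1 + v) * (1 - u) * ((1 - u) * (1 + v)) = (4:ℂ) • GE c j k
    calc (1 + v) * (1 - u) * ((1 - u) * (1 + v))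
        = (1 + v) * (((1 - u) * (1 - u)) * (1 + v)) := by noncomm_ring
      _ = (1 + v) * (((2:ℂ) • (1 - u)) * (1 + v)) := by rw [hMM]
      _ = (2:ℂ) • ((1 + v) * ((1 - u) * (1 + v))) := by
            rw [smul_mul_assoc, mul_smul_comm]
      _ = (2:ℂ) • ((1 + v) * ((1 + v) * (1 - u))) := by rw [hcomm]
      _ = (2:ℂ) • (((1 + v) * (1 + v)) * (1 - u)) := by rw [mul_assoc]
      _ = (2:ℂ) • (((2:ℂ) • (1 + v)) * (1 - u)) := by rw [hNN]
      _ = (4:ℂ) • ((1 - u) * (1 + v)) := by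
            rw [smul_mul_assoc, smul_smul, hcomm]; norm_num
      _ = (4:ℂ) • GE c j k := rfl
  rw [conjTranspose_smul, smul_mul_smul_comm, h4, smul_smul]
  have hs : (star ((1:ℂ)/2) * ((1:ℂ)/2) * 4) = 1 := by
    have hstar : star ((1:ℂ)/2) = (1:ℂ)/2 := by
      simp [Complex.ext_iff, Complex.star_def]
    rw [hstar]; norm_num
  rw [hs, one_smul]

theorem trace_rho_XE (hc : IsMajorana n c) (σ : Fin n → Bool) {j k : Fin n}
    (hjk : j ≠ k) :
    (rho c σ * XE c j k).trace = ((1 - sgn (σ j) * sgn (σ k) : ℝ) : ℂ) := by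
  have t1 : (Q c σ (List.finRange n)).trace = (2:ℂ)^n :=
    trace_Q hc σ (List.nodup_finRange n)
  have t2 : (Q c σ (List.finRange n) * uE c j k).trace = 0 :=
    trace_anti hc σ (List.mem_finRange j) (anti_u hc hjk)
  have t3 : (Q c σ (List.finRange n) * vE c j k).trace = 0 :=
    trace_anti hc σ (List.mem_finRange j) (anti_v hc hjk)
  have t4 : (Q c σ (List.finRange n)
      * (c (iA j) * c (iB j) * c (iA k) * c (iB k))).trace
      = -(((sgn (σ j) * sgn (σ k) : ℝ) : ℂ) * (2:ℂ)^n) := by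
    rw [q_eq, mul_neg, trace_neg,
      Q_mul_zz hc σ (List.mem_finRange j) (List.mem_finRange k), trace_smul, t1,
      smul_eq_mul]
  unfold rho XE
  rw [smul_mul_assoc, trace_smul, mul_add, mul_sub, mul_add, mul_one,
    trace_add, trace_sub, trace_add, t1, t2, t3, t4]
  rw [smul_eq_mul]
  push_cast
  field_simp
  ring

end FMC

namespace FMC
variable {n : ℕ} {c : Fin (2*n) → Matrix (Fin (2^n)) (Fin (2^n)) ℂ}

theorem psd_smul_conj {t : ℝ} (ht : 0 ≤ t) (A : Mat n) :
    (((t : ℝ) : ℂ) • (Aᴴ * A)).PosSemidef := by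
  have h : ((t:ℝ):ℂ) • (Aᴴ * A)
      = (((Real.sqrt t : ℝ) : ℂ) • A)ᴴ * (((Real.sqrt t : ℝ) : ℂ) • A) := by
    rw [conjTranspose_smul, smul_mul_smul_comm]
    congr 1
    rw [Complex.star_def, Complex.conj_ofReal, ← Complex.ofReal_mul,
      Real.mul_self_sqrt ht]
  rw [h]
  exact Matrix.posSemidef_conjTranspose_mul_self _

theorem psd_sum {ι : Type*} (s : Finset ι) (f : ι → Mat n)
    (h : ∀ i ∈ s, (f i).PosSemidef) : (∑ i ∈ s, f i).PosSemidef :=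
  Finset.sum_induction f _ (fun _ _ ha hb => ha.add hb) Matrix.PosSemidef.zero h

theorem spec_bound {b : ℝ} {H : Mat n}
    (hpsd : (((b:ℝ):ℂ) • (1 : Mat n) - H).PosSemidef)
    {x : ℝ} (hx : (x:ℂ) ∈ spectrum ℂ H) : x ≤ b := by
  rw [spectrum.mem_iff] at hx
  have hdet : ((x:ℂ) • (1 : Mat n) - H).det = 0 := by
    by_contra hne
    exact hx (by
      rw [Algebra.algebraMap_eq_smul_one]
      exact (Matrix.isUnit_iff_isUnit_det _).2 (isUnit_iff_ne_zero.2 hne))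
  obtain ⟨v, hv0, hv⟩ := (Matrix.exists_mulVec_eq_zero_iff).2 hdet
  have hHv : H *ᵥ v = (x:ℂ) • v := by
    rw [Matrix.sub_mulVec, Matrix.smul_mulVec, Matrix.one_mulVec,
      sub_eq_zero] at hv
    exact hv.symm
  have hq := hpsd.dotProduct_mulVec_nonneg v
  rw [Matrix.sub_mulVec, Matrix.smul_mulVec, Matrix.one_mulVec,
    dotProduct_sub, hHv, dotProduct_smul, dotProduct_smul] at hq
  have hp : star v ⬝ᵥ v = ((∑ i, Complex.normSq (v i) : ℝ) : ℂ) := by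
    push_cast
    refine Finset.sum_congr rfl fun i _ => ?_
    simp only [Pi.star_apply, Complex.star_def]
    rw [mul_comm, Complex.mul_conj]
  have hS : 0 < ∑ i, Complex.normSq (v i) := by
    obtain ⟨i, hi⟩ := Function.ne_iff.1 hv0
    refine Finset.sum_pos' (fun i _ => Complex.normSq_nonneg _) ⟨i, Finset.mem_univ i, ?_⟩
    exact Complex.normSq_pos.2 hi
  rw [hp, smul_eq_mul, smul_eq_mul] at hq
  have hq2 : 0 ≤ (((b - x) * ∑ i, Complex.normSq (v i) : ℝ) : ℂ) := by
    rw [Complex.ofReal_mul, Complex.ofReal_sub]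
    convert hq using 1
    ring
  rw [Complex.zero_le_real] at hq2
  nlinarith

theorem edge_id (hc : IsMajorana n c) {j k : Fin n} (hjk : j ≠ k) (wv : ℝ) :
    ((wv:ℂ)/4) • XE c j k + ((wv/4 : ℝ):ℂ) • GE c j k
      = ((wv/2 : ℝ):ℂ) • (1 - z c j * z c k) := by
  have h1 : ((wv:ℂ)/4) = ((wv/4 : ℝ):ℂ) := by push_cast; ring
  rw [h1, ← smul_add, add_comm (XE c j k), GE_add_XE hc hjk, smul_smul]
  congr 1
  push_cast
  ring

end FMC

namespace FMC
variable {n : ℕ} {c : Fin (2*n) → Matrix (Fin (2^n)) (Fin (2^n)) ℂ}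

theorem sum_rho_weighted (hc : IsMajorana n c) (E : Finset (Fin n × Fin n))
    (w : Fin n × Fin n → ℝ) (V : ℝ) :
    ∑ σ : Fin n → Bool,
      ((2*(V - ∑ e ∈ E, w e/4 * (1 - sgn (σ e.1) * sgn (σ e.2))) : ℝ):ℂ) • rho c σ
    = ((2*V : ℝ):ℂ) • (1 : Mat n)
        - ∑ e ∈ E, ((w e/2 : ℝ):ℂ) • ((1 : Mat n) - z c e.1 * z c e.2) := by
  have step1 : ∀ σ : Fin n → Bool,
      ((2*(V - ∑ e ∈ E, w e/4 * (1 - sgn (σ e.1) * sgn (σ e.2))) : ℝ):ℂ) • rho c σ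
      = ((2*V:ℝ):ℂ) • rho c σ
          - ∑ e ∈ E, ((w e/2:ℝ):ℂ) •
              (((1 - sgn (σ e.1) * sgn (σ e.2) : ℝ):ℂ) • rho c σ) := by
    intro σ
    have hco : ((2*(V - ∑ e ∈ E, w e/4 * (1 - sgn (σ e.1) * sgn (σ e.2))) : ℝ):ℂ)
        = ((2*V:ℝ):ℂ)
          - ∑ e ∈ E, ((w e/2:ℝ):ℂ) * ((1 - sgn (σ e.1) * sgn (σ e.2) : ℝ):ℂ) := by
      push_cast
      rw [mul_sub, Finset.mul_sum]
      congr 1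
      exact Finset.sum_congr rfl (fun e _ => by ring)
    rw [hco, sub_smul, Finset.sum_smul]
    congr 1
    exact Finset.sum_congr rfl (fun e _ => by rw [mul_smul])
  rw [Finset.sum_congr rfl (fun σ _ => step1 σ), Finset.sum_sub_distrib,
    ← Finset.smul_sum, sum_rho hc]
  congr 1
  rw [Finset.sum_comm]
  refine Finset.sum_congr rfl fun e he => ?_
  rw [← Finset.smul_sum]
  congr 1
  have hterm : ∀ σ : Fin n → Bool,
      ((1 - sgn (σ e.1) * sgn (σ e.2) : ℝ):ℂ) • rho c σ
        = rho c σ - rho c σ * (z c e.1 * z c e.2) := by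
    intro σ
    rw [rho_mul_zz hc, Complex.ofReal_sub, sub_smul, Complex.ofReal_one, one_smul]
  rw [Finset.sum_congr rfl (fun σ _ => hterm σ), Finset.sum_sub_distrib,
    sum_rho hc, ← Finset.sum_mul, sum_rho hc, one_mul]

end FMC

namespace FMC
variable {n : ℕ} {c : Fin (2*n) → Matrix (Fin (2^n)) (Fin (2^n)) ℂ}

theorem row_collapse (i : Fin (2*n)) :
    (∑ k, (((1 : Matrix (Fin (2*n)) (Fin (2*n)) ℝ) i k : ℝ):ℂ) • c k) = c i := by
  rw [Finset.sum_eq_single i]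
  · simp [Matrix.one_apply]
  · intro b _ hb
    simp [Matrix.one_apply, (Ne.symm hb : ¬ i = b)]
  · intro h
    exact absurd (Finset.mem_univ i) h

theorem gauss_eq (σ : Fin n → Bool) :
    gaussOf n c (fun l => sgn (σ l)) 1 = rho c σ := by
  unfold gaussOf rho Q
  congr 1
  refine congrArg List.prod (List.map_congr_left (fun j _ => ?_))
  rw [row_collapse, row_collapse]
  unfold fac z iA iB
  rw [mul_comm, mul_smul]

theorem val_nonneg (E : Finset (Fin n × Fin n)) (w : Fin n × Fin n → ℝ)
    (hw : ∀ e ∈ E, 0 ≤ w e) (σ : Fin n → Bool) :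
    0 ≤ ∑ e ∈ E, w e/4 * (1 - sgn (σ e.1) * sgn (σ e.2)) := by
  refine Finset.sum_nonneg fun e he => ?_
  have h1 := hw e he
  rcases sgn_cases (σ e.1) with h2 | h2 <;> rcases sgn_cases (σ e.2) with h3 | h3 <;>
    rw [h2, h3] <;> nlinarith

end FMC


/-- For the Fermionic Max Cut Hamiltonian, there is a pure fermionic
Gaussian state achieving approximation ratio `1/2`. -/
theorem fermionic_max_cut_gaussian_half
    (n : ℕ) (hn : 1 ≤ n)
    (c : Fin (2*n) → Matrix (Fin (2^n)) (Fin (2^n)) ℂ) (hc : IsMajorana n c)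
    (E : Finset (Fin n × Fin n)) (hE : ∀ e ∈ E, e.1 < e.2)
    (w : Fin n × Fin n → ℝ) (hw : ∀ e ∈ E, 0 ≤ w e)
    (H : Matrix (Fin (2^n)) (Fin (2^n)) ℂ)
    (hH : H = ∑ e ∈ E, ((w e : ℂ)/4) •
        ((1 : Matrix (Fin (2^n)) (Fin (2^n)) ℂ)
          + Complex.I • (majA n c e.1 * majB n c e.2)
          - Complex.I • (majB n c e.1 * majA n c e.2)
          + majA n c e.1 * majB n c e.1 * majA n c e.2 * majB n c e.2)) :
    ∃ ρ : Matrix (Fin (2^n)) (Fin (2^n)) ℂ,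
      IsPureGaussianState n c ρ ∧
      (((1:ℝ)/2 * lamMax H : ℝ) : ℂ) ≤ (ρ * H).trace := by
  classical
  set val : (Fin n → Bool) → ℝ :=
    fun σ => ∑ e ∈ E, w e/4 * (1 - FMC.sgn (σ e.1) * FMC.sgn (σ e.2)) with hvaldef
  obtain ⟨σm, hσm⟩ := Finite.exists_max val
  have hEne : ∀ e ∈ E, e.1 ≠ e.2 := fun e he => (hE e he).ne
  have hH' : H = ∑ e ∈ E, ((w e : ℂ)/4) • FMC.XE c e.1 e.2 := hH
  refine ⟨FMC.rho c σm, ?_, ?_⟩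
  · refine ⟨fun l => FMC.sgn (σm l), 1, fun j => FMC.sgn_cases _, ?_,
      Matrix.det_one, (FMC.gauss_eq σm).symm⟩
    rw [Matrix.transpose_one, mul_one]
  · have htr : (FMC.rho c σm * H).trace = ((val σm : ℝ) : ℂ) := by
      rw [hH', Finset.mul_sum]
      calc (∑ e ∈ E, FMC.rho c σm * (((w e:ℂ)/4) • FMC.XE c e.1 e.2)).trace
          = ∑ e ∈ E, ((w e:ℂ)/4) * (FMC.rho c σm * FMC.XE c e.1 e.2).trace := by
            rw [Matrix.trace_sum]
            exact Finset.sum_congr rfl fun e he => by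
              rw [mul_smul_comm, Matrix.trace_smul, smul_eq_mul]
        _ = ∑ e ∈ E, ((w e:ℂ)/4) * ((1 - FMC.sgn (σm e.1) * FMC.sgn (σm e.2) : ℝ):ℂ) :=
            Finset.sum_congr rfl fun e he => by
              rw [FMC.trace_rho_XE hc σm (hEne e he)]
        _ = ((val σm : ℝ):ℂ) := by
            simp only [hvaldef]
            push_cast
            exact Finset.sum_congr rfl fun e he => by ring
    have hkey : ((2*val σm : ℝ):ℂ) • (1 : FMC.Mat n) - H
        = ∑ e ∈ E, ((w e/4 : ℝ):ℂ) • FMC.GE c e.1 e.2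
          + ∑ σ : Fin n → Bool, ((2*(val σm - val σ) : ℝ):ℂ) • FMC.rho c σ := by
      simp only [hvaldef]
      rw [FMC.sum_rho_weighted hc E w]
      rw [hH']
      have hsum : ∑ e ∈ E, (((w e:ℂ)/4) • FMC.XE c e.1 e.2
            + ((w e/4:ℝ):ℂ) • FMC.GE c e.1 e.2)
          = ∑ e ∈ E, ((w e/2:ℝ):ℂ) • ((1:FMC.Mat n) - FMC.z c e.1 * FMC.z c e.2) :=
        Finset.sum_congr rfl fun e he => FMC.edge_id hc (hEne e he) (w e)
      rw [Finset.sum_add_distrib] at hsum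
      rw [← hsum]
      abel
    have hpsd : (((2*val σm : ℝ):ℂ) • (1 : FMC.Mat n) - H).PosSemidef := by
      rw [hkey]
      refine Matrix.PosSemidef.add (FMC.psd_sum E _ (fun e he => ?_))
        (FMC.psd_sum Finset.univ _ (fun σ _ => ?_))
      · rw [FMC.GE_conj hc (hEne e he)]
        exact FMC.psd_smul_conj (by have := hw e he; linarith) _
      · rw [FMC.rho_eq_conj hc σ]
        exact FMC.psd_smul_conj (by have := hσm σ; linarith) _
    have hub : lamMax H ≤ 2 * val σm := by
      have hlm : lamMax H = sSup {x : ℝ | (x:ℂ) ∈ spectrum ℂ H} := rfl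
      rw [hlm]
      refine Real.sSup_le (fun x hx => FMC.spec_bound hpsd hx) ?_
      have h0 := FMC.val_nonneg E w hw σm
      simp only [hvaldef] at *
      linarith
    rw [htr, Complex.real_le_real]
    linarith

end
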